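/- For every natural number n ≥ 3, the volume 2nΛ(π/n) of the regular ideal n-gonal bipyramid satisfies 2nΛ(π/n) ≤ 2π·log(n/2). -/

import Mathlib

open Real MeasureTheory

/-- The Lobachevsky function `Λ(θ) = −∫₀^θ log |2 sin t| dt`. -/
noncomputable def lob (θ : ℝ) : ℝ := - ∫ t in (0:ℝ)..θ, Real.log |2 * Real.sin t|

/-! For `0 < t ≤ √2`, `sin t ≥ t - t³/6` gives `t ≤ sin t · (1 + t²/4)`, hence
`log |2 sin t| ≥ log 2 + log t - t²/4`. Integrating, `Λ(θ) ≤ θ (1 - log 2θ) + θ³/12`, so for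
`θ = π/n ≤ π/3` we get `2nΛ(π/n) ≤ 2π (log (n/2) + 1 - log π + θ²/12)`, and the error term is
negative because `log π > 1.1 > 1 + θ²/12`. -/

open intervalIntegral

lemma intervalIntegrable_log_abs_two_mul_sin (a b : ℝ) :
    IntervalIntegrable (fun t => log |2 * sin t|) volume a b :=
  (analyticOnNhd_const.mul analyticOnNhd_sin).meromorphicOn.intervalIntegrable_log_norm

lemma le_sin_mul_one_add_sq_div_four {t : ℝ} (ht : 0 ≤ t) (ht2 : t ^ 2 ≤ 2) :
    t ≤ sin t * (1 + t ^ 2 / 4) :=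
  -- `(t - t³/6) (1 + t²/4) = t + t³ (2 - t²) / 24`
  calc t ≤ (t - t ^ 3 / 6) * (1 + t ^ 2 / 4) := by
        nlinarith [mul_nonneg (pow_nonneg ht 3) (sub_nonneg.2 ht2)]
    _ ≤ sin t * (1 + t ^ 2 / 4) := by gcongr; exact sin_ge_sub_cube ht

lemma log_two_add_log_sub_sq_div_four_le {t : ℝ} (ht : 0 < t) (ht2 : t ^ 2 ≤ 2) :
    log 2 + log t - t ^ 2 / 4 ≤ log |2 * sin t| := by
  have hsin_bound := le_sin_mul_one_add_sq_div_four ht.le ht2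
  have hsin : 0 < sin t := pos_of_mul_pos_left (ht.trans_le hsin_bound) (by positivity)
  have hlog : log t ≤ log (sin t) + t ^ 2 / 4 :=
    calc log t ≤ log (sin t * (1 + t ^ 2 / 4)) := log_le_log ht hsin_bound
      _ = log (sin t) + log (1 + t ^ 2 / 4) := log_mul hsin.ne' (by positivity)
      _ ≤ log (sin t) + t ^ 2 / 4 := by
          gcongr; linarith [log_le_sub_one_of_pos (by positivity : (0:ℝ) < 1 + t ^ 2 / 4)]
  rw [abs_of_pos (by positivity), log_mul two_ne_zero hsin.ne']
  linarith

lemma integral_log_two_add_log_sub_sq_div_four (θ : ℝ) :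
    ∫ t in (0:ℝ)..θ, (log 2 + log t - t ^ 2 / 4) =
      θ * log 2 + (θ * log θ - θ) - θ ^ 3 / 12 := by
  rw [integral_sub (intervalIntegrable_const.add intervalIntegrable_log')
      (((continuous_pow 2).div_const 4).intervalIntegrable 0 θ),
    integral_add intervalIntegrable_const intervalIntegrable_log', integral_log,
    intervalIntegral.integral_const, intervalIntegral.integral_div, integral_pow,
    smul_eq_mul, log_zero]
  ring

lemma lob_le {θ : ℝ} (hθ : 0 ≤ θ) (hθ2 : θ ^ 2 ≤ 2) :
    lob θ ≤ θ - θ * log 2 - θ * log θ + θ ^ 3 / 12 := by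
  have hmono : ∫ t in (0:ℝ)..θ, (log 2 + log t - t ^ 2 / 4) ≤
      ∫ t in (0:ℝ)..θ, log |2 * sin t| :=
    integral_mono_on_of_le_Ioo hθ
      ((intervalIntegrable_const.add intervalIntegrable_log').sub
        (((continuous_pow 2).div_const 4).intervalIntegrable 0 θ))
      (intervalIntegrable_log_abs_two_mul_sin 0 θ) fun t ht =>
        log_two_add_log_sub_sq_div_four_le ht.1 (by nlinarith [ht.1, ht.2])
  rw [integral_log_two_add_log_sub_sq_div_four] at hmono
  unfold lob
  linarith

lemma log_pi_gt_d1 : 1.1 < log π := by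
  rw [lt_log_iff_exp_lt pi_pos]
  calc exp 1.1 = exp 1 * exp 0.1 := by rw [← exp_add]; norm_num
    _ < 2.7182818286 * (1 / (1 - 0.1)) := by
        gcongr
        · exact exp_one_lt_d9
        · exact exp_bound_div_one_sub_of_interval' (by norm_num) (by norm_num)
    _ < π := by linarith [pi_gt_d2]

/-- For every `n ≥ 3`, the volume `2nΛ(π/n)` of the regular ideal `n`-gonal
bipyramid satisfies `2nΛ(π/n) ≤ 2π·log(n/2)`. -/
theorem bipyramid_volume_bound (n : ℕ) (hn : 3 ≤ n) :
    2 * n * lob (Real.pi / n) ≤ 2 * Real.pi * Real.log ((n : ℝ) / 2) := by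
  have hn0 : (0 : ℝ) < n := by positivity
  set θ := π / n with hθ
  have hnθ : n * θ = π := by rw [hθ]; field_simp
  have hθ_le : θ ≤ π / 3 := by rw [hθ]; gcongr; exact_mod_cast hn
  have hθ_sq : θ ^ 2 ≤ 1.2 := by nlinarith [pi_lt_d2, div_pos pi_pos hn0]
  have hlogθ : log θ = log π - log n := log_div pi_ne_zero hn0.ne'
  calc 2 * n * lob θ ≤ 2 * n * (θ - θ * log 2 - θ * log θ + θ ^ 3 / 12) := by
        gcongr; exact lob_le (by positivity) (by linarith)
    _ = 2 * π * (log n - log 2 - (log π - 1 - θ ^ 2 / 12)) := by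
        linear_combination 2 * (1 - log 2 - log θ + θ ^ 2 / 12) * hnθ - 2 * π * hlogθ
    _ ≤ 2 * π * (log n - log 2) := by
        have := log_pi_gt_d1
        exact mul_le_mul_of_nonneg_left (by linarith) two_pi_pos.le
    _ = 2 * π * log (n / 2) := by rw [log_div hn0.ne' two_ne_zero]
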